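/- Let (Ω, F, P) be a probability space and let X⁽¹⁾, X⁽²⁾ : Ω → ℝ be random variables with E[(X⁽¹⁾ − X⁽²⁾)²] < ∞. Denoting by L(X⁽¹⁾) and L(X⁽²⁾) their laws, one has ‖L(X⁽¹⁾) − L(X⁽²⁾)‖²_{M₀} := ∫_ℝ |\widehat{L(X⁽¹⁾)}(y) − \widehat{L(X⁽²⁾)}(y)|² e^{−y²} dy ≤ √π · E[(X⁽¹⁾ − X⁽²⁾)²]. -/

import Mathlib

/-!
For each frequency `y`, the map `x ↦ e^{ixy}` is `|y|`-Lipschitz, so by Jensen's inequality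
`|\widehat{L(X⁽¹⁾)}(y) − \widehat{L(X⁽²⁾)}(y)|² ≤ y² E[(X⁽¹⁾ − X⁽²⁾)²]`. Integrating against `e^{−y²}`
and using `∫ y² e^{−y²} dy = √π / 2` gives the bound.
-/

open MeasureTheory Real

/-- The Fourier transform (characteristic function) of a measure `μ` on `ℝ`:
`μ̂(y) = ∫ e^{i x y} dμ(x)`. -/
noncomputable def fourierOfMeasure (μ : Measure ℝ) (y : ℝ) : ℂ :=
  ∫ x, Complex.exp (Complex.I * x * y) ∂μ

theorem integral_sq_mul_exp_neg_mul_sq {b : ℝ} (hb : 0 < b) :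
    ∫ x : ℝ, x ^ 2 * exp (-b * x ^ 2) = √(π / b) / (2 * b) := by
  have h_Ioi := integral_rpow_mul_exp_neg_mul_rpow two_pos (by norm_num : (-1 : ℝ) < 2) hb
  have hΓ : Gamma ((2 + 1) / 2) = √π / 2 := by
    rw [show ((2 : ℝ) + 1) / 2 = 1 / 2 + 1 by norm_num, Gamma_add_one (by norm_num),
      Gamma_one_half_eq]
    ring
  have h_even := integral_comp_abs (f := fun x => x ^ (2 : ℝ) * exp (-b * x ^ (2 : ℝ)))
  simp only [rpow_two, sq_abs] at h_even h_Ioi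
  have hpow : b ^ (-(2 + 1) / 2 : ℝ) = (b * √b)⁻¹ := by
    rw [show (-(2 + 1) / 2 : ℝ) = -(1 + 1 / 2) by norm_num, rpow_neg hb.le, rpow_add hb,
      rpow_one, ← sqrt_eq_rpow]
  rw [h_even, h_Ioi, hΓ, hpow, sqrt_div' _ hb.le]
  field_simp

open Complex in
lemma norm_cexp_I_mul_sub_le (a b : ℝ) : ‖cexp (I * a) - cexp (I * b)‖ ≤ |a - b| := by
  have : cexp (I * a) - cexp (I * b) = cexp (I * b) * (cexp (I * ↑(a - b)) - 1) := by
    rw [mul_sub, ← Complex.exp_add]; push_cast; ring_nf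
  rw [this, norm_mul, norm_exp_I_mul_ofReal, one_mul]
  exact norm_exp_I_mul_ofReal_sub_one_le

theorem sq_norm_integral_le {α E : Type*} [MeasurableSpace α] {μ : Measure α}
    [IsProbabilityMeasure μ] [NormedAddCommGroup E] [NormedSpace ℝ E] [CompleteSpace E]
    {f : α → E} (hf : Integrable f μ) (hf2 : Integrable (fun x => ‖f x‖ ^ 2) μ) :
    ‖∫ x, f x ∂μ‖ ^ 2 ≤ ∫ x, ‖f x‖ ^ 2 ∂μ :=
  (convexOn_univ_norm.pow (fun x _ => norm_nonneg x) 2).map_integral_le (by fun_prop)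
    isClosed_univ (by simp) hf hf2

section

variable {Ω : Type*} [MeasurableSpace Ω] (P : Measure Ω)

lemma fourierOfMeasure_map {X : Ω → ℝ} (hX : AEMeasurable X P) (y : ℝ) :
    fourierOfMeasure (P.map X) y = ∫ ω, Complex.exp (Complex.I * X ω * y) ∂P :=
  integral_map hX (by fun_prop)

lemma integrable_cexp_I_mul [IsFiniteMeasure P] {X : Ω → ℝ} (hX : AEMeasurable X P) (y : ℝ) :
    Integrable (fun ω => Complex.exp (Complex.I * X ω * y)) P := by
  refine (integrable_const (1 : ℝ)).mono' (by fun_prop) (ae_of_all _ fun ω => ?_)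
  rw [show Complex.I * X ω * y = Complex.I * ↑(X ω * y) by push_cast; ring,
    Complex.norm_exp_I_mul_ofReal]

lemma sq_norm_fourierOfMeasure_map_sub_le [IsProbabilityMeasure P] {X₁ X₂ : Ω → ℝ}
    (hX₁ : AEMeasurable X₁ P) (hX₂ : AEMeasurable X₂ P)
    (h_int : Integrable (fun ω => (X₁ ω - X₂ ω) ^ 2) P) (y : ℝ) :
    ‖fourierOfMeasure (P.map X₁) y - fourierOfMeasure (P.map X₂) y‖ ^ 2 ≤
      y ^ 2 * ∫ ω, (X₁ ω - X₂ ω) ^ 2 ∂P := by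
  have hpt : ∀ ω, ‖Complex.exp (Complex.I * X₁ ω * y) - Complex.exp (Complex.I * X₂ ω * y)‖ ^ 2
      ≤ y ^ 2 * (X₁ ω - X₂ ω) ^ 2 := fun ω => by
    have h := norm_cexp_I_mul_sub_le (X₁ ω * y) (X₂ ω * y)
    push_cast at h
    simp only [mul_assoc]
    rw [← sq_abs y, ← sq_abs (X₁ ω - X₂ ω), ← mul_pow, ← abs_mul, mul_comm y, sub_mul]
    exact pow_le_pow_left₀ (norm_nonneg _) h 2
  have hf := (integrable_cexp_I_mul P hX₁ y).sub (integrable_cexp_I_mul P hX₂ y)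
  have hbound := h_int.const_mul (y ^ 2)
  have hf2 : Integrable (fun ω => ‖Complex.exp (Complex.I * X₁ ω * y) -
      Complex.exp (Complex.I * X₂ ω * y)‖ ^ 2) P :=
    hbound.mono' (hf.aestronglyMeasurable.norm.pow 2)
      (ae_of_all _ fun ω => by simpa only [norm_pow, norm_norm] using hpt ω)
  rw [fourierOfMeasure_map P hX₁, fourierOfMeasure_map P hX₂, ← integral_sub
    (integrable_cexp_I_mul P hX₁ y) (integrable_cexp_I_mul P hX₂ y), ← integral_const_mul]
  exact (sq_norm_integral_le hf hf2).trans (integral_mono hf2 hbound hpt)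

end

/-- If `E[(X⁽¹⁾ − X⁽²⁾)²] < ∞`, then the laws satisfy
`‖L(X⁽¹⁾) − L(X⁽²⁾)‖²_{M₀} ≤ √π · E[(X⁽¹⁾ − X⁽²⁾)²]`. -/
theorem law_M0_dist_le {Ω : Type*} [MeasurableSpace Ω] (P : Measure Ω) [IsProbabilityMeasure P]
    (X₁ X₂ : Ω → ℝ) (hX₁ : Measurable X₁) (hX₂ : Measurable X₂)
    (h_int : Integrable (fun ω => (X₁ ω - X₂ ω) ^ 2) P) :
    (∫ y : ℝ, ‖fourierOfMeasure (P.map X₁) y - fourierOfMeasure (P.map X₂) y‖ ^ 2 *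
        Real.exp (-y ^ 2)) ≤
      Real.sqrt π * ∫ ω, (X₁ ω - X₂ ω) ^ 2 ∂P := by
  set C := ∫ ω, (X₁ ω - X₂ ω) ^ 2 ∂P
  have hC : 0 ≤ C := integral_nonneg fun ω => sq_nonneg _
  have h_moment : Integrable (fun y : ℝ => y ^ 2 * exp (-1 * y ^ 2)) := by
    simpa only [rpow_two] using integrable_rpow_mul_exp_neg_mul_sq one_pos (s := 2) (by norm_num)
  calc (∫ y : ℝ, ‖fourierOfMeasure (P.map X₁) y - fourierOfMeasure (P.map X₂) y‖ ^ 2 *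
        exp (-y ^ 2))
      ≤ ∫ y : ℝ, C * (y ^ 2 * exp (-1 * y ^ 2)) := by
        refine integral_mono_of_nonneg (ae_of_all _ fun y => by positivity)
          (h_moment.const_mul C) (ae_of_all _ fun y => ?_)
        simp only [neg_one_mul]
        rw [← mul_assoc, mul_comm C]
        exact mul_le_mul_of_nonneg_right (sq_norm_fourierOfMeasure_map_sub_le P
          hX₁.aemeasurable hX₂.aemeasurable h_int y) (exp_nonneg _)
    _ = C * (√π / 2) := by
        rw [integral_const_mul, integral_sq_mul_exp_neg_mul_sq one_pos, div_one, mul_one]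
    _ ≤ √π * C := by nlinarith [sqrt_nonneg π]
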